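/- Let B be a 3×2 matrix with columns b₁, b₂ and let U ∈ ℝ^{3×3} be symmetric positive definite with BᵀB = (U²)'. Then (B|ν) with ν as in the explicit formula satisfies bⱼ · ν = (U²)_{j3} for j = 1, 2, where ν = (1/|U⁻¹e₃|²)[det(U⁻¹)(b₁ × b₂) − Σ_{k=1}²(U⁻¹e_k·U⁻¹e₃) b_k]. -/

import Mathlib

open Matrix

noncomputable def normalVec (U : Matrix (Fin 3) (Fin 3) ℝ) (B : Matrix (Fin 3) (Fin 2) ℝ) :
    Fin 3 → ℝ :=
  let n3 : Fin 3 → ℝ := U⁻¹ *ᵥ Pi.single 2 1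
  (1 / (n3 ⬝ᵥ n3)) •
    ((U⁻¹).det • crossProduct (fun i => B i 0) (fun i => B i 1) -
      ∑ k : Fin 2, ((U⁻¹ *ᵥ Pi.single k.castSucc 1) ⬝ᵥ n3) • (fun i => B i k))

/-- If `BᵀB = (U²)'` then the columns `b₁, b₂` of `B` satisfy `bⱼ · ν = (U²)_{j3}`. -/
theorem columns_dot_normal (U : Matrix (Fin 3) (Fin 3) ℝ)
    (hsymm : U.IsSymm) (hpos : U.PosDef)
    (B : Matrix (Fin 3) (Fin 2) ℝ)
    (hB : ∀ i j : Fin 2, (Bᵀ * B) i j = (U * U) i.castSucc j.castSucc) :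
    ∀ j : Fin 2, (fun i => B i j) ⬝ᵥ normalVec U B = (U * U) j.castSucc 2 := by
  have hdet : U.det ≠ 0 := ne_of_gt hpos.det_pos
  have hdetU : IsUnit U.det := isUnit_iff_ne_zero.mpr hdet
  have hinvsymm : (U⁻¹)ᵀ = U⁻¹ := by
    rw [transpose_nonsing_inv, hsymm.eq]
  have hdot : ∀ a b : Fin 3,
      (U⁻¹ *ᵥ Pi.single a 1) ⬝ᵥ (U⁻¹ *ᵥ Pi.single b 1) = (U * U)⁻¹ a b := by
    intro a b
    rw [Matrix.mul_inv_rev]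
    have h2 : (U⁻¹ * U⁻¹) a b = ((U⁻¹)ᵀ * U⁻¹) a b := by rw [hinvsymm]
    rw [h2, mul_apply, dotProduct]
    simp [mulVec_single, transpose_apply]
  have hW22 : (U * U)⁻¹ 2 2 ≠ 0 := by
    rw [← hdot 2 2]
    intro h
    have hz : (U⁻¹ *ᵥ Pi.single 2 1 : Fin 3 → ℝ) = 0 := dotProduct_self_eq_zero.mp h
    have h0 : (Pi.single 2 1 : Fin 3 → ℝ) = 0 := by
      have h1 : U *ᵥ (U⁻¹ *ᵥ Pi.single 2 1) = U *ᵥ (0 : Fin 3 → ℝ) := congrArg _ hz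
      rwa [mulVec_mulVec, Matrix.mul_nonsing_inv U hdetU, one_mulVec, mulVec_zero] at h1
    simpa using congrFun h0 2
  have hbb : ∀ a b : Fin 2,
      (fun i => B i a) ⬝ᵥ (fun i => B i b) = (U * U) a.castSucc b.castSucc := by
    intro a b
    rw [← hB a b, mul_apply, dotProduct]
    simp [transpose_apply]
  intro j
  have hinv_entry : ∑ k : Fin 3, (U * U) j.castSucc k * (U * U)⁻¹ k 2 = 0 := by
    have h1 : (U * U) * (U * U)⁻¹ = 1 :=
      mul_nonsing_inv _ (isUnit_iff_ne_zero.mpr (by rw [det_mul]; exact mul_ne_zero hdet hdet))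
    have h2 := congrFun (congrFun h1 j.castSucc) 2
    rw [mul_apply] at h2
    rw [h2]
    exact one_apply_ne (Fin.castSucc_lt_last j).ne
  have hsum : ∑ k : Fin 2, (U * U) j.castSucc k.castSucc * (U * U)⁻¹ k.castSucc 2
      = -((U * U) j.castSucc 2 * (U * U)⁻¹ 2 2) := by
    rw [Fin.sum_univ_castSucc] at hinv_entry
    have : (Fin.last 2) = (2 : Fin 3) := rfl
    rw [this] at hinv_entry
    linarith
  have hcross : (fun i => B i j) ⬝ᵥ
      (crossProduct (fun i => B i 0) (fun i => B i 1) : Fin 3 → ℝ) = 0 := by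
    fin_cases j
    · exact dot_self_cross _ _
    · exact dot_cross_self _ _
  have hds : ∀ (f : Fin 2 → Fin 3 → ℝ) (v : Fin 3 → ℝ),
      v ⬝ᵥ (∑ k, f k) = ∑ k, v ⬝ᵥ f k := by
    intro f v
    simp only [dotProduct, Finset.sum_apply, Finset.mul_sum]
    rw [Finset.sum_comm]
  simp only [normalVec]
  rw [dotProduct_smul, dotProduct_sub, dotProduct_smul, hcross, hds]
  simp only [dotProduct_smul, hbb, hdot, smul_eq_mul, mul_zero, zero_sub]
  rw [show ∑ k : Fin 2, (U * U)⁻¹ k.castSucc 2 * (U * U) j.castSucc k.castSucc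
      = ∑ k : Fin 2, (U * U) j.castSucc k.castSucc * (U * U)⁻¹ k.castSucc 2 by
    exact Finset.sum_congr rfl fun k _ => mul_comm _ _, hsum]
  field_simp
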